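/- arXiv:1610.03420 — 6 statements merged into one kernel-verified Lean document; each statement's English description precedes it below -/
import Mathlib

section
/- (Completeness part of Theorem 2.1.) Let (ψ, φ) be a reproducing pair of weakly measurable functions from X into H. Then the map T_φ : 𝒱_φ(X, μ) → H is surjective: for every h ∈ H there exists ξ ∈ 𝒱_φ(X, μ) with T_φ ξ = h (one may take ξ = C_ψ(S_{ψ,φ}^{-1} h)). Consequently the quotient V_φ(X, μ) = 𝒱_φ(X, μ)/Ker T_φ, with norm ‖[ξ]_φ‖ = ‖T_φ ξ‖, is isometrically isomorphic to H and hence is a Hilbert space. -/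
open MeasureTheory
open scoped ENNReal NNReal

local notation "⟪" x ", " y "⟫" => @inner ℂ _ _ x y

/-- completeness part of Theorem 2.1: If `(ψ, φ)` is a reproducing pair,
then `T_φ : 𝒱_φ(X, μ) → H` is surjective: for every `h ∈ H` there is a measurable
`ξ ∈ 𝒱_φ(X, μ)` whose Riesz representative is `h` (one may take `ξ = C_ψ (S⁻¹ h)`).
Membership of `ξ` in `𝒱_φ(X, μ)` and `T_φ ξ = h` are spelled out explicitly. -/
theorem statement3
    {X : Type*} [MeasurableSpace X] (μ : Measure X)
    {H : Type*} [NormedAddCommGroup H] [InnerProductSpace ℂ H] [CompleteSpace H]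
    (ψ φ : X → H)
    (hψmeas : ∀ f : H, Measurable fun x => ⟪ψ x, f⟫)
    (hφmeas : ∀ f : H, Measurable fun x => ⟪φ x, f⟫)
    (hint : ∀ f g : H, Integrable (fun x => ⟪ψ x, f⟫ * ⟪g, φ x⟫) μ)
    (hbdd : ∃ c > (0 : ℝ), ∀ f g : H,
      ‖∫ x, ⟪ψ x, f⟫ * ⟪g, φ x⟫ ∂μ‖ ≤ c * ‖f‖ * ‖g‖)
    (S : H ≃L[ℂ] H)
    (hS : ∀ f g : H, ⟪g, S f⟫ = ∫ x, ⟪ψ x, f⟫ * ⟪g, φ x⟫ ∂μ) :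
    ∀ h : H, ∃ ξ : X → ℂ,
      Measurable ξ ∧
      (∀ g : H, Integrable (fun x => ξ x * ⟪g, φ x⟫) μ) ∧
      (∃ c > (0 : ℝ), ∀ g : H, ‖∫ x, ξ x * ⟪g, φ x⟫ ∂μ‖ ≤ c * ‖g‖) ∧
      (ξ = fun x => ⟪ψ x, S.symm h⟫) ∧
      (∀ g : H, ⟪g, h⟫ = ∫ x, ξ x * ⟪g, φ x⟫ ∂μ) := by
  intro h
  refine ⟨fun x => ⟪ψ x, S.symm h⟫, hψmeas _, fun g => hint _ g, ⟨‖h‖ + 1, by positivity, ?_⟩, rfl, ?_⟩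
  · intro g
    rw [← hS (S.symm h) g, S.apply_symm_apply]
    calc ‖⟪g, h⟫‖ ≤ ‖g‖ * ‖h‖ := norm_inner_le_norm g h
    _ ≤ (‖h‖ + 1) * ‖g‖ := by nlinarith [norm_nonneg g, norm_nonneg h]
  · intro g
    rw [← hS (S.symm h) g, S.apply_symm_apply]
end

section
/- (Duality part of Theorem 2.1.) Let (ψ, φ) be a reproducing pair of weakly measurable functions from X into H. Then for every ξ ∈ 𝒱_φ(X, μ) and every h ∈ H: the function x ↦ ξ(x)·conj(⟨h, φ_x⟩) is μ-integrable, the function C_φ h : x ↦ ⟨h, φ_x⟩ belongs to 𝒱_ψ(X, μ), and |∫_X ξ(x) conj(⟨h, φ_x⟩) dμ(x)| ≤ ‖S_{ψ,φ}^{-1}‖ · ‖T_φ ξ‖ · ‖T_ψ(C_φ h)‖. Thus the sesquilinear form ⟪ξ, η⟫ = ∫_X ξ(x) conj(η(x)) dμ(x) is a bounded pairing between V_φ(X, μ) and V_ψ(X, μ). -/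
open MeasureTheory
open scoped ENNReal NNReal

local notation "⟪" x ", " y "⟫" => @inner ℂ _ _ x y

/-- duality part of Theorem 2.1: For a reproducing pair `(ψ, φ)`, every
`ξ ∈ 𝒱_φ(X, μ)` (with `T_φ ξ = tξ`) and every `h ∈ H`: `x ↦ ξ(x)·conj(⟨h, φ_x⟩)` is
integrable, `C_φ h : x ↦ ⟨h, φ_x⟩` belongs to `𝒱_ψ(X, μ)` with Riesz representative
`k = T_ψ(C_φ h)`, and `|∫ ξ(x) conj(⟨h, φ_x⟩) dμ| ≤ ‖S⁻¹‖ ‖T_φ ξ‖ ‖T_ψ(C_φ h)‖`.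
Recall `⟨h, φ_x⟩ = ⟪φ x, h⟫` and `⟨φ_x, g⟩ = ⟪g, φ x⟫` in Mathlib conventions. -/
theorem statement4
    {X : Type*} [MeasurableSpace X] (μ : Measure X)
    {H : Type*} [NormedAddCommGroup H] [InnerProductSpace ℂ H] [CompleteSpace H]
    (ψ φ : X → H)
    (hψmeas : ∀ f : H, Measurable fun x => ⟪ψ x, f⟫)
    (hφmeas : ∀ f : H, Measurable fun x => ⟪φ x, f⟫)
    (hint : ∀ f g : H, Integrable (fun x => ⟪ψ x, f⟫ * ⟪g, φ x⟫) μ)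
    (hbdd : ∃ c > (0 : ℝ), ∀ f g : H,
      ‖∫ x, ⟪ψ x, f⟫ * ⟪g, φ x⟫ ∂μ‖ ≤ c * ‖f‖ * ‖g‖)
    (S : H ≃L[ℂ] H)
    (hS : ∀ f g : H, ⟪g, S f⟫ = ∫ x, ⟪ψ x, f⟫ * ⟪g, φ x⟫ ∂μ)
    (ξ : X → ℂ) (hξmeas : Measurable ξ)
    (hξint : ∀ g : H, Integrable (fun x => ξ x * ⟪g, φ x⟫) μ)
    (hξbdd : ∃ c > (0 : ℝ), ∀ g : H, ‖∫ x, ξ x * ⟪g, φ x⟫ ∂μ‖ ≤ c * ‖g‖)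
    (tξ : H) (htξ : ∀ g : H, ⟪g, tξ⟫ = ∫ x, ξ x * ⟪g, φ x⟫ ∂μ)
    (h : H) :
    Integrable (fun x => ξ x * (starRingEnd ℂ) ⟪φ x, h⟫) μ ∧
    (∀ g : H, Integrable (fun x => ⟪φ x, h⟫ * ⟪g, ψ x⟫) μ) ∧
    (∃ c > (0 : ℝ), ∀ g : H, ‖∫ x, ⟪φ x, h⟫ * ⟪g, ψ x⟫ ∂μ‖ ≤ c * ‖g‖) ∧
    ∃ k : H, (∀ g : H, ⟪g, k⟫ = ∫ x, ⟪φ x, h⟫ * ⟪g, ψ x⟫ ∂μ) ∧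
      ‖∫ x, ξ x * (starRingEnd ℂ) ⟪φ x, h⟫ ∂μ‖ ≤
        ‖(S.symm : H →L[ℂ] H)‖ * ‖tξ‖ * ‖k‖ := by
  set A : H →L[ℂ] H := (S : H →L[ℂ] H) with hA
  set k : H := ContinuousLinearMap.adjoint A h with hk
  have hconj : ∀ g : H, (fun x => ⟪φ x, h⟫ * ⟪g, ψ x⟫) =
      fun x => (starRingEnd ℂ) (⟪ψ x, g⟫ * ⟪h, φ x⟫) := by
    intro g
    funext x
    simp only [map_mul, inner_conj_symm]
    ring
  have key : ∀ g : H, (∫ x, ⟪φ x, h⟫ * ⟪g, ψ x⟫ ∂μ) = ⟪g, k⟫ := by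
    intro g
    rw [hconj g, integral_conj, ← hS g h, inner_conj_symm, hk,
      ContinuousLinearMap.adjoint_inner_right]
    rfl
  have hint1 : Integrable (fun x => ξ x * (starRingEnd ℂ) ⟪φ x, h⟫) μ := by
    simpa only [inner_conj_symm] using hξint h
  refine ⟨hint1, ?_, ?_, k, fun g => (key g).symm, ?_⟩
  · intro g
    rw [hconj g]
    exact (Complex.conjCLE.toContinuousLinearMap : ℂ →L[ℝ] ℂ).integrable_comp (hint g h)
  · refine ⟨‖k‖ + 1, by positivity, fun g => ?_⟩
    rw [key g]
    calc ‖⟪g, k⟫‖ ≤ ‖g‖ * ‖k‖ := norm_inner_le_norm g k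
      _ ≤ (‖k‖ + 1) * ‖g‖ := by nlinarith [norm_nonneg g, norm_nonneg k]
  · have e1 : (∫ x, ξ x * (starRingEnd ℂ) ⟪φ x, h⟫ ∂μ) = ⟪h, tξ⟫ := by
      rw [htξ h]
      simp only [inner_conj_symm]
    have e2 : ⟪h, tξ⟫ = ⟪k, S.symm tξ⟫ := by
      rw [hk, ContinuousLinearMap.adjoint_inner_left]
      have : A (S.symm tξ) = tξ := S.apply_symm_apply tξ
      rw [this]
    rw [e1, e2]
    calc ‖⟪k, S.symm tξ⟫‖ ≤ ‖k‖ * ‖S.symm tξ‖ := norm_inner_le_norm _ _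
      _ ≤ ‖k‖ * (‖(S.symm : H →L[ℂ] H)‖ * ‖tξ‖) := by
          gcongr
          exact (S.symm : H →L[ℂ] H).le_opNorm tξ
      _ = ‖(S.symm : H →L[ℂ] H)‖ * ‖tξ‖ * ‖k‖ := by ring
end

section
/- (Proposition 4.3 for Lebesgue spaces.) Let (X, μ) be a measure space, H a complex Hilbert space, ψ : X → H weakly measurable, and 1 ≤ r < ∞. Define C_ψ f : X → ℂ by (C_ψ f)(x) = ⟨f, ψ_x⟩ and D_r(C_ψ) = { f ∈ H : C_ψ f ∈ L^r(X, μ) }. Then C_ψ : D_r(C_ψ) → L^r(X, μ) is a closed linear map: if f_n → f in H, each f_n ∈ D_r(C_ψ), and C_ψ f_n converges in the L^r norm to some ξ ∈ L^r(X, μ), then f ∈ D_r(C_ψ) and C_ψ f = ξ μ-almost everywhere. -/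
open MeasureTheory Filter
open scoped ENNReal NNReal Topology

local notation "⟪" x ", " y "⟫" => @inner ℂ _ _ x y

/-- `L^p` convergence gives a.e. convergence along a subsequence, where the two limits agree. -/
theorem ae_eq_of_tendsto_eLpNorm_of_ae_tendsto {X E : Type*} [MeasurableSpace X]
    {μ : Measure X} [NormedAddCommGroup E] {p : ℝ≥0∞} (hp : p ≠ 0)
    {g : ℕ → X → E} {g₀ ξ : X → E} (hg : ∀ n, AEStronglyMeasurable (g n) μ)
    (hξ : AEStronglyMeasurable ξ μ)
    (hLp : Tendsto (fun n => eLpNorm (g n - ξ) p μ) atTop (𝓝 0))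
    (hpt : ∀ᵐ x ∂μ, Tendsto (fun n => g n x) atTop (𝓝 (g₀ x))) :
    g₀ =ᵐ[μ] ξ := by
  obtain ⟨ns, hns, hae⟩ :=
    (tendstoInMeasure_of_tendsto_eLpNorm hp hg hξ hLp).exists_seq_tendsto_ae
  filter_upwards [hpt, hae] with x hx_pt hx_sub
  exact tendsto_nhds_unique (hx_pt.comp hns.tendsto_atTop) hx_sub

theorem statement7_general
    {X : Type*} [MeasurableSpace X] (μ : Measure X)
    {H : Type*} [NormedAddCommGroup H] [InnerProductSpace ℂ H]
    (ψ : X → H)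
    (r : ℝ≥0∞) (hr1 : 1 ≤ r)
    (f : H) (fseq : ℕ → H)
    (hmem : ∀ n, MemLp (fun x => ⟪ψ x, fseq n⟫) r μ)
    (hfH : Tendsto fseq atTop (𝓝 f))
    (ξ : X → ℂ) (hξ : MemLp ξ r μ)
    (hLr : Tendsto (fun n => eLpNorm (fun x => ⟪ψ x, fseq n⟫ - ξ x) r μ) atTop (𝓝 0)) :
    MemLp (fun x => ⟪ψ x, f⟫) r μ ∧ (fun x => ⟪ψ x, f⟫) =ᵐ[μ] ξ := by
  have hr0 : r ≠ 0 := (zero_lt_one.trans_le hr1).ne'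
  have hpt : ∀ x, Tendsto (fun n => ⟪ψ x, fseq n⟫) atTop (𝓝 ⟪ψ x, f⟫) :=
    fun x => tendsto_const_nhds.inner hfH
  have heq : (fun x => ⟪ψ x, f⟫) =ᵐ[μ] ξ :=
    ae_eq_of_tendsto_eLpNorm_of_ae_tendsto hr0 (fun n => (hmem n).aestronglyMeasurable)
      hξ.aestronglyMeasurable hLr (ae_of_all μ hpt)
  exact ⟨hξ.ae_eq heq.symm, heq⟩

/-- Proposition 4.3 for Lebesgue spaces: For weakly measurable
`ψ : X → H` and `1 ≤ r < ∞`, the analysis map `C_ψ : D_r(C_ψ) → L^r(X, μ)` is closed: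
if `f_n → f` in `H`, each `C_ψ f_n ∈ L^r`, and `C_ψ f_n → ξ` in the `L^r` norm with
`ξ ∈ L^r`, then `C_ψ f ∈ L^r` and `C_ψ f = ξ` μ-a.e. -/
theorem statement7
    {X : Type*} [MeasurableSpace X] (μ : Measure X)
    {H : Type*} [NormedAddCommGroup H] [InnerProductSpace ℂ H] [CompleteSpace H]
    (ψ : X → H)
    (hψmeas : ∀ f : H, Measurable fun x => ⟪ψ x, f⟫)
    (r : ℝ≥0∞) (hr1 : 1 ≤ r) (hr2 : r ≠ ∞)
    (f : H) (fseq : ℕ → H)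
    (hmem : ∀ n, MemLp (fun x => ⟪ψ x, fseq n⟫) r μ)
    (hfH : Tendsto fseq atTop (𝓝 f))
    (ξ : X → ℂ) (hξ : MemLp ξ r μ)
    (hLr : Tendsto (fun n => eLpNorm (fun x => ⟪ψ x, fseq n⟫ - ξ x) r μ) atTop (𝓝 0)) :
    MemLp (fun x => ⟪ψ x, f⟫) r μ ∧ (fun x => ⟪ψ x, f⟫) =ᵐ[μ] ξ :=
  statement7_general μ ψ r hr1 f fseq hmem hfH ξ hξ hLr
end

section
/- (Corollary 4.5 for Lebesgue spaces.) Let (X, μ) be a measure space, H a complex Hilbert space, ψ, φ : X → H weakly measurable, and let 1 ≤ p ≤ ∞ with conjugate exponent p̄ (1/p + 1/p̄ = 1). Suppose C_ψ f = (x ↦ ⟨f, ψ_x⟩) ∈ L^p(X, μ) for every f ∈ H and C_φ g = (x ↦ ⟨g, φ_x⟩) ∈ L^{p̄}(X, μ) for every g ∈ H. Then for all f, g ∈ H the function x ↦ ⟨f, ψ_x⟩⟨φ_x, g⟩ is μ-integrable, there is a constant c > 0 such that |∫_X ⟨f, ψ_x⟩⟨φ_x, g⟩ dμ(x)| ≤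 c ‖f‖ ‖g‖ for all f, g ∈ H, and hence there exists a bounded operator S_{ψ,φ} on H with ⟨S_{ψ,φ} f, g⟩ = ∫_X ⟨f, ψ_x⟩⟨φ_x, g⟩ dμ(x). -/
open MeasureTheory
open scoped ENNReal NNReal

local notation "⟪" x ", " y "⟫" => @inner ℂ _ _ x y

/-!
By the closed graph theorem the coefficient maps `f ↦ ⟪ψ ·, f⟫` and `g ↦ ⟪φ ·, g⟫` are bounded
from `H` into `L^p` and `L^q`. Hölder's inequality then makes
`(g, f) ↦ ∫ ⟪ψ x, f⟫ ⟪g, φ x⟫ dμ` a bounded sesquilinear form, and the Riesz representation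
theorem turns it into a bounded operator.
-/

section CoefficientMap

variable {X 𝕜 E F : Type*} [MeasurableSpace X] {μ : Measure X} [NontriviallyNormedField 𝕜]
  [NormedAddCommGroup E] [NormedSpace 𝕜 E] [NormedAddCommGroup F] [NormedSpace 𝕜 F]
  {p : ℝ≥0∞} (ℓ : X → E →L[𝕜] F) (hℓ : ∀ f, MemLp (fun x => ℓ x f) p μ)

noncomputable def coeffToLp : E →ₗ[𝕜] Lp F p μ where
  toFun f := (hℓ f).toLp
  map_add' f g := by
    rw [← MemLp.toLp_add]
    exact MemLp.toLp_congr _ _ (.of_forall fun x => map_add (ℓ x) f g)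
  map_smul' c f := by
    rw [RingHom.id_apply, ← MemLp.toLp_const_smul]
    exact MemLp.toLp_congr _ _ (.of_forall fun x => map_smul (ℓ x) c f)

theorem coeffToLp_ae_eq (f : E) : coeffToLp ℓ hℓ f =ᵐ[μ] fun x => ℓ x f :=
  (hℓ f).coeFn_toLp

theorem continuous_coeffToLp [Fact (1 ≤ p)] [CompleteSpace E] [CompleteSpace F] :
    Continuous (coeffToLp ℓ hℓ) := by
  refine (coeffToLp ℓ hℓ).continuous_of_seq_closed_graph fun u f T hu hT => ?_
  -- A subsequence converges a.e., and there the limit is `ℓ x f` because each `ℓ x` is continuous.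
  obtain ⟨ns, hns, hae⟩ := (tendstoInMeasure_of_tendsto_Lp hT).exists_seq_tendsto_ae
  have hcoe : ∀ᵐ x ∂μ, ∀ n, coeffToLp ℓ hℓ (u n) x = ℓ x (u n) :=
    ae_all_iff.mpr fun n => coeffToLp_ae_eq ℓ hℓ (u n)
  have hT_ae : ⇑T =ᵐ[μ] fun x => ℓ x f := by
    filter_upwards [hae, hcoe] with x hx hcx
    simp only [Function.comp_def, hcx] at hx
    exact tendsto_nhds_unique hx
      (((ℓ x).continuous.tendsto f).comp (hu.comp hns.tendsto_atTop))
  exact Lp.ext (hT_ae.trans (coeffToLp_ae_eq ℓ hℓ f).symm)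

end CoefficientMap

theorem exists_eLpNorm_le_of_forall_memLp {X 𝕜 E F : Type*} [MeasurableSpace X] {μ : Measure X}
    [NontriviallyNormedField 𝕜] [NormedAddCommGroup E] [NormedSpace 𝕜 E] [CompleteSpace E]
    [NormedAddCommGroup F] [NormedSpace 𝕜 F] [CompleteSpace F] {p : ℝ≥0∞} (hp : 1 ≤ p)
    (ℓ : X → E →L[𝕜] F) (hℓ : ∀ f, MemLp (fun x => ℓ x f) p μ) :
    ∃ C : ℝ≥0, ∀ f, eLpNorm (fun x => ℓ x f) p μ ≤ C * ‖f‖ₑ := by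
  have : Fact (1 ≤ p) := ⟨hp⟩
  let T : E →L[𝕜] Lp F p μ := ⟨coeffToLp ℓ hℓ, continuous_coeffToLp ℓ hℓ⟩
  refine ⟨‖T‖₊, fun f => ?_⟩
  rw [← eLpNorm_congr_ae (coeffToLp_ae_eq ℓ hℓ f), ← Lp.enorm_def]
  exact T.le_opENorm f

theorem enorm_integral_mul_le {X 𝕜 : Type*} [MeasurableSpace X] {μ : Measure X} [RCLike 𝕜]
    {p q : ℝ≥0∞} [ENNReal.HolderConjugate p q] {A B : X → 𝕜}
    (hA : AEStronglyMeasurable A μ) (hB : AEStronglyMeasurable B μ) :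
    ‖∫ x, A x * B x ∂μ‖ₑ ≤ eLpNorm A p μ * eLpNorm B q μ :=
  calc ‖∫ x, A x * B x ∂μ‖ₑ ≤ ∫⁻ x, ‖A x * B x‖ₑ ∂μ := enorm_integral_le_lintegral_enorm _
    _ = eLpNorm (A • B) 1 μ := eLpNorm_one_eq_lintegral_enorm.symm
    _ ≤ eLpNorm A p μ * eLpNorm B q μ := eLpNorm_smul_le_mul_eLpNorm hB hA

section SesquilinearForm

variable {X H : Type*} [MeasurableSpace X] {μ : Measure X}
  [NormedAddCommGroup H] [InnerProductSpace ℂ H] {φ : X → H} {q : ℝ≥0∞}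

theorem memLp_inner_swap {g : H} (hφ : MemLp (fun x => ⟪φ x, g⟫) q μ) :
    MemLp (fun x => ⟪g, φ x⟫) q μ := by
  simpa only [Pi.star_def, RCLike.star_def, inner_conj_symm] using hφ.star

theorem eLpNorm_inner_swap (g : H) :
    eLpNorm (fun x => ⟪g, φ x⟫) q μ = eLpNorm (fun x => ⟪φ x, g⟫) q μ :=
  eLpNorm_congr_norm_ae (.of_forall fun _ => norm_inner_symm _ _)

variable {ψ : X → H} {p : ℝ≥0∞} [ENNReal.HolderConjugate p q]

theorem integrable_inner_mul_inner (hψ : ∀ f, MemLp (fun x => ⟪ψ x, f⟫) p μ)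
    (hφ : ∀ g, MemLp (fun x => ⟪φ x, g⟫) q μ) (f g : H) :
    Integrable (fun x => ⟪ψ x, f⟫ * ⟪g, φ x⟫) μ :=
  (hψ f).integrable_mul (memLp_inner_swap (hφ g))

theorem exists_norm_integral_inner_mul_inner_le [CompleteSpace H]
    (hψ : ∀ f, MemLp (fun x => ⟪ψ x, f⟫) p μ) (hφ : ∀ g, MemLp (fun x => ⟪φ x, g⟫) q μ) :
    ∃ C : ℝ≥0, ∀ g f, ‖∫ x, ⟪ψ x, f⟫ * ⟪g, φ x⟫ ∂μ‖ ≤ C * ‖g‖ * ‖f‖ := by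
  obtain ⟨Cψ, hCψ⟩ := exists_eLpNorm_le_of_forall_memLp (ENNReal.HolderConjugate.one_le p q)
    (fun x => innerSL ℂ (ψ x)) hψ
  obtain ⟨Cφ, hCφ⟩ := exists_eLpNorm_le_of_forall_memLp (ENNReal.HolderConjugate.one_le q p)
    (fun x => innerSL ℂ (φ x)) hφ
  refine ⟨Cφ * Cψ, fun g f => ?_⟩
  have h : ‖∫ x, ⟪ψ x, f⟫ * ⟪g, φ x⟫ ∂μ‖ₑ ≤ (Cφ * ‖g‖ₑ) * (Cψ * ‖f‖ₑ) := calc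
    _ ≤ eLpNorm (fun x => ⟪ψ x, f⟫) p μ * eLpNorm (fun x => ⟪g, φ x⟫) q μ :=
        enorm_integral_mul_le (hψ f).1 (memLp_inner_swap (hφ g)).1
    _ ≤ (Cψ * ‖f‖ₑ) * (Cφ * ‖g‖ₑ) := by
        rw [eLpNorm_inner_swap]
        exact mul_le_mul' (hCψ f) (hCφ g)
    _ = (Cφ * ‖g‖ₑ) * (Cψ * ‖f‖ₑ) := mul_comm _ _
  simp only [enorm_eq_nnnorm, ← ENNReal.coe_mul, ENNReal.coe_le_coe, ← NNReal.coe_le_coe] at h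
  push_cast at h ⊢
  linarith

theorem exists_sesqForm_eq_integral [CompleteSpace H] (hψ : ∀ f, MemLp (fun x => ⟪ψ x, f⟫) p μ)
    (hφ : ∀ g, MemLp (fun x => ⟪φ x, g⟫) q μ) :
    ∃ B : H →L⋆[ℂ] H →L[ℂ] ℂ, ∀ g f, B g f = ∫ x, ⟪ψ x, f⟫ * ⟪g, φ x⟫ ∂μ := by
  have hint := integrable_inner_mul_inner hψ hφ
  obtain ⟨C, hC⟩ := exists_norm_integral_inner_mul_inner_le hψ hφ
  let B : H →ₗ⋆[ℂ] H →ₗ[ℂ] ℂ :=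
    LinearMap.mk₂'ₛₗ (starRingEnd ℂ) (RingHom.id ℂ) (fun g f => ∫ x, ⟪ψ x, f⟫ * ⟪g, φ x⟫ ∂μ)
      (fun g₁ g₂ f => by
        simp_rw [inner_add_left, mul_add]
        exact integral_add (hint f g₁) (hint f g₂))
      (fun c g f => by
        simp_rw [inner_smul_left, mul_left_comm _ ((starRingEnd ℂ) c), smul_eq_mul]
        exact integral_const_mul _ _)
      (fun g f₁ f₂ => by
        simp_rw [inner_add_right, add_mul]
        exact integral_add (hint f₁ g) (hint f₂ g))
      (fun c g f => by
        simp_rw [inner_smul_right, mul_assoc, RingHom.id_apply, smul_eq_mul]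
        exact integral_const_mul _ _)
  exact ⟨B.mkContinuous₂ C hC, fun g f => rfl⟩

end SesquilinearForm

theorem statement9_general
    {X : Type*} [MeasurableSpace X] (μ : Measure X)
    {H : Type*} [NormedAddCommGroup H] [InnerProductSpace ℂ H] [CompleteSpace H]
    (ψ φ : X → H)
    (p q : ℝ≥0∞) (hpq : p⁻¹ + q⁻¹ = 1)
    (hψp : ∀ f : H, MemLp (fun x => ⟪ψ x, f⟫) p μ)
    (hφq : ∀ g : H, MemLp (fun x => ⟪φ x, g⟫) q μ) :
    (∀ f g : H, Integrable (fun x => ⟪ψ x, f⟫ * ⟪g, φ x⟫) μ) ∧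
    (∃ c > (0 : ℝ), ∀ f g : H,
      ‖∫ x, ⟪ψ x, f⟫ * ⟪g, φ x⟫ ∂μ‖ ≤ c * ‖f‖ * ‖g‖) ∧
    ∃ S : H →L[ℂ] H, ∀ f g : H, ⟪g, S f⟫ = ∫ x, ⟪ψ x, f⟫ * ⟪g, φ x⟫ ∂μ := by
  have : ENNReal.HolderConjugate p q := ENNReal.holderConjugate_iff.mpr hpq
  obtain ⟨B, hB⟩ := exists_sesqForm_eq_integral hψp hφq
  set S := ContinuousLinearMap.adjoint (InnerProductSpace.continuousLinearMapOfBilin B)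
  have hS : ∀ f g, ⟪g, S f⟫ = ∫ x, ⟪ψ x, f⟫ * ⟪g, φ x⟫ ∂μ := fun f g => by
    rw [ContinuousLinearMap.adjoint_inner_right,
      InnerProductSpace.continuousLinearMapOfBilin_apply, hB]
  refine ⟨integrable_inner_mul_inner hψp hφq, ⟨‖S‖ + 1, by positivity, fun f g => ?_⟩, S, hS⟩
  rw [← hS]
  calc ‖⟪g, S f⟫‖ ≤ ‖g‖ * (‖S‖ * ‖f‖) :=
        (norm_inner_le_norm g (S f)).trans (by gcongr; exact S.le_opNorm f)
    _ ≤ (‖S‖ + 1) * ‖f‖ * ‖g‖ := by nlinarith [norm_nonneg f, norm_nonneg g]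

/-- Corollary 4.5 for Lebesgue spaces: If `C_ψ f ∈ L^p` for every `f` and
`C_φ g ∈ L^p̄` for every `g` (conjugate exponents), then `x ↦ ⟨f, ψ_x⟩⟨φ_x, g⟩` is
integrable for all `f, g`, the form is bounded: `|∫ ⟨f, ψ_x⟩⟨φ_x, g⟩ dμ| ≤ c‖f‖‖g‖`,
and there is a bounded operator `S_{ψ,φ}` with
`⟨S_{ψ,φ} f, g⟩ = ∫ ⟨f, ψ_x⟩⟨φ_x, g⟩ dμ`. Here `⟨f, ψ_x⟩ = ⟪ψ x, f⟫`,
`⟨φ_x, g⟩ = ⟪g, φ x⟫` and `C_φ g = (x ↦ ⟨g, φ_x⟩) = (x ↦ ⟪φ x, g⟫)`. -/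
theorem statement9
    {X : Type*} [MeasurableSpace X] (μ : Measure X)
    {H : Type*} [NormedAddCommGroup H] [InnerProductSpace ℂ H] [CompleteSpace H]
    (ψ φ : X → H)
    (hψmeas : ∀ f : H, Measurable fun x => ⟪ψ x, f⟫)
    (hφmeas : ∀ f : H, Measurable fun x => ⟪φ x, f⟫)
    (p q : ℝ≥0∞) (hp : 1 ≤ p) (hpq : p⁻¹ + q⁻¹ = 1)
    (hψp : ∀ f : H, MemLp (fun x => ⟪ψ x, f⟫) p μ)
    (hφq : ∀ g : H, MemLp (fun x => ⟪φ x, g⟫) q μ) :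
    (∀ f g : H, Integrable (fun x => ⟪ψ x, f⟫ * ⟪g, φ x⟫) μ) ∧
    (∃ c > (0 : ℝ), ∀ f g : H,
      ‖∫ x, ⟪ψ x, f⟫ * ⟪g, φ x⟫ ∂μ‖ ≤ c * ‖f‖ * ‖g‖) ∧
    ∃ S : H →L[ℂ] H, ∀ f g : H, ⟪g, S f⟫ = ∫ x, ⟪ψ x, f⟫ * ⟪g, φ x⟫ ∂μ :=
  statement9_general μ ψ φ p q hpq hψp hφq
end

section
/- (Lower semi-frame analysis operator, used in Section 5.1.) Let (X, μ) be a measure space, H a complex Hilbert space, and φ : X → H weakly measurable. Assume φ is a lower semi-frame: there exists c > 0 such that c‖f‖² ≤ ∫_X |⟨f, φ_x⟩|² dμ(x) for every f ∈ H (the integral taken in [0, ∞]). Let D(C_φ) = { f ∈ H : ∫_X |⟨f, φ_x⟩|² dμ(x) < ∞ } and C_φ f = (x ↦ ⟨f, φ_x⟩) ∈ L²(X, μ) for f ∈ D(C_φ). Then C_φ is injective on D(C_φ), and its range is closed in L²(X, μ): if f_n ∈ D(C_φ) and C_φ f_n converges in L² to some ξ, then there exists f ∈ D(C_φ) with ξ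 = C_φ f μ-almost everywhere. -/
open MeasureTheory Filter
open scoped ENNReal NNReal Topology

local notation "⟪" x ", " y "⟫" => @inner ℂ _ _ x y

/-! The lower frame bound reads `√c ‖f‖ ≤ ‖C_φ f‖₂`. Hence `C_φ` is injective, and if
`C_φ f_n → ξ` in `L²` then `(f_n)` is Cauchy in `H`, with a limit `f`. Weak continuity gives
`C_φ f_n → C_φ f` pointwise, while a subsequence of `C_φ f_n` converges to `ξ` almost
everywhere, so `ξ = C_φ f` a.e. -/

theorem lintegral_nnnorm_sq_eq_eLpNorm_sq {X E : Type*} [MeasurableSpace X]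
    [NormedAddCommGroup E] (μ : Measure X) (g : X → E) :
    ∫⁻ x, (‖g x‖₊ : ℝ≥0∞) ^ 2 ∂μ = eLpNorm g 2 μ ^ 2 := by
  rw [eLpNorm_eq_lintegral_rpow_enorm_toReal two_ne_zero ENNReal.ofNat_ne_top,
    ENNReal.toReal_ofNat, ← ENNReal.rpow_natCast _ 2, ← ENNReal.rpow_mul]
  norm_num
  rfl

theorem memLp_two_iff_lintegral_nnnorm_sq_lt_top {X E : Type*} [MeasurableSpace X]
    [NormedAddCommGroup E] {μ : Measure X} {g : X → E} (hg : AEStronglyMeasurable g μ) :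
    MemLp g 2 μ ↔ ∫⁻ x, (‖g x‖₊ : ℝ≥0∞) ^ 2 ∂μ < ∞ := by
  simp [MemLp, hg, lintegral_nnnorm_sq_eq_eLpNorm_sq]

theorem cauchySeq_of_dist_le_add {α β : Type*} [PseudoMetricSpace α] [Nonempty β]
    [SemilatticeSup β] {u : β → α} {b : β → ℝ} (h : ∀ n m, dist (u n) (u m) ≤ b n + b m)
    (hb : Tendsto b atTop (𝓝 0)) : CauchySeq u := by
  rw [cauchySeq_iff_tendsto_dist_atTop_0]
  have hsum : Tendsto (fun p : β × β => b p.1 + b p.2) atTop (𝓝 0) := by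
    rw [← prod_atTop_atTop_eq]
    simpa using (hb.comp tendsto_fst).add (hb.comp tendsto_snd)
  exact squeeze_zero (fun _ => dist_nonneg) (fun p => h p.1 p.2) hsum

theorem ae_eq_of_tendsto_eLpNorm_of_tendsto {X E : Type*} [MeasurableSpace X]
    [NormedAddCommGroup E] {μ : Measure X} {p : ℝ≥0∞} (hp : p ≠ 0) {F : ℕ → X → E}
    {g ξ : X → E} (hF : ∀ n, AEStronglyMeasurable (F n) μ) (hξ : AEStronglyMeasurable ξ μ)
    (hLp : Tendsto (fun n => eLpNorm (F n - ξ) p μ) atTop (𝓝 0))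
    (hpt : ∀ x, Tendsto (fun n => F n x) atTop (𝓝 (g x))) : ξ =ᵐ[μ] g := by
  obtain ⟨ns, hns, hae⟩ := (tendstoInMeasure_of_tendsto_eLpNorm hp hF hξ hLp).exists_seq_tendsto_ae
  filter_upwards [hae] with x hx
  exact tendsto_nhds_unique hx ((hpt x).comp hns.tendsto_atTop)

def IsLowerSemiFrame {X H : Type*} [MeasurableSpace X] [NormedAddCommGroup H]
    [InnerProductSpace ℂ H] (μ : Measure X) (φ : X → H) (c : ℝ) : Prop :=
  ∀ f : H, ENNReal.ofReal (c * ‖f‖ ^ 2) ≤ ∫⁻ x, (‖⟪φ x, f⟫‖₊ : ℝ≥0∞) ^ 2 ∂μ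

namespace IsLowerSemiFrame

variable {X : Type*} [MeasurableSpace X] {μ : Measure X}
  {H : Type*} [NormedAddCommGroup H] [InnerProductSpace ℂ H] {φ : X → H} {c : ℝ}

theorem ofReal_sqrt_mul_norm_le_eLpNorm (hlow : IsLowerSemiFrame μ φ c) (hc : 0 ≤ c) (f : H) :
    ENNReal.ofReal (√c * ‖f‖) ≤ eLpNorm (fun x => ⟪φ x, f⟫) 2 μ := by
  rw [← ENNReal.pow_le_pow_left_iff two_ne_zero, ← ENNReal.ofReal_pow (by positivity), mul_pow,
    Real.sq_sqrt hc, ← lintegral_nnnorm_sq_eq_eLpNorm_sq]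
  exact hlow f

theorem eq_of_inner_ae_eq (hlow : IsLowerSemiFrame μ φ c) (hc : 0 < c) {f f' : H}
    (h : (fun x => ⟪φ x, f⟫) =ᵐ[μ] fun x => ⟪φ x, f'⟫) : f = f' := by
  have hzero : (fun x => ⟪φ x, f - f'⟫) =ᵐ[μ] 0 := by
    filter_upwards [h] with x hx
    simp [hx]
  have hle := (hlow.ofReal_sqrt_mul_norm_le_eLpNorm hc.le (f - f')).trans_eq
    ((eLpNorm_congr_ae hzero).trans eLpNorm_zero)
  rw [nonpos_iff_eq_zero, ENNReal.ofReal_eq_zero] at hle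
  have : ‖f - f'‖ ≤ 0 := nonpos_of_mul_nonpos_right hle (Real.sqrt_pos.2 hc)
  exact sub_eq_zero.1 (norm_le_zero_iff.1 this)

theorem cauchySeq_of_tendsto_eLpNorm_inner_sub (hlow : IsLowerSemiFrame μ φ c) (hc : 0 < c)
    (hφ : ∀ f : H, AEStronglyMeasurable (fun x => ⟪φ x, f⟫) μ) {fseq : ℕ → H} {ξ : X → ℂ}
    (hξ : AEStronglyMeasurable ξ μ) (hfin : ∀ n, eLpNorm (fun x => ⟪φ x, fseq n⟫ - ξ x) 2 μ ≠ ∞)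
    (hLp : Tendsto (fun n => eLpNorm (fun x => ⟪φ x, fseq n⟫ - ξ x) 2 μ) atTop (𝓝 0)) :
    CauchySeq fseq := by
  set a := fun n => eLpNorm (fun x => ⟪φ x, fseq n⟫ - ξ x) 2 μ
  have hsc : 0 < √c := Real.sqrt_pos.2 hc
  refine cauchySeq_of_dist_le_add (b := fun n => (a n).toReal / √c) (fun n m => ?_)
    (by simpa using (ENNReal.tendsto_toReal ENNReal.zero_ne_top).comp hLp |>.div_const √c)
  have hsplit : (fun x => ⟪φ x, fseq n - fseq m⟫)
      = (fun x => ⟪φ x, fseq n⟫ - ξ x) - fun x => ⟪φ x, fseq m⟫ - ξ x := by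
    funext x
    simp
  have hle : ENNReal.ofReal (√c * ‖fseq n - fseq m‖) ≤ a n + a m := by
    refine (hlow.ofReal_sqrt_mul_norm_le_eLpNorm hc.le _).trans ?_
    rw [hsplit]
    exact eLpNorm_sub_le ((hφ _).sub hξ) ((hφ _).sub hξ) one_le_two
  rw [ENNReal.ofReal_le_iff_le_toReal (ENNReal.add_ne_top.2 ⟨hfin n, hfin m⟩),
    ENNReal.toReal_add (hfin n) (hfin m)] at hle
  rw [dist_eq_norm, ← add_div, le_div_iff₀ hsc, mul_comm]
  exact hle

end IsLowerSemiFrame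

/-- lower semi-frame analysis operator, Section 5.1: If `φ : X → H` is a
weakly measurable lower semi-frame, i.e. `c‖f‖² ≤ ∫ |⟨f, φ_x⟩|² dμ` (integral in `[0,∞]`)
for all `f`, then `C_φ` is injective on `D(C_φ) = {f : ∫ |⟨f, φ_x⟩|² dμ < ∞}`, and its
range is closed in `L²(X, μ)`: if `f_n ∈ D(C_φ)` and `C_φ f_n → ξ` in `L²`, then there is
`f ∈ D(C_φ)` with `ξ = C_φ f` μ-a.e. Here `⟨f, φ_x⟩ = ⟪φ x, f⟫`. -/
theorem statement11
    {X : Type*} [MeasurableSpace X] (μ : Measure X)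
    {H : Type*} [NormedAddCommGroup H] [InnerProductSpace ℂ H] [CompleteSpace H]
    (φ : X → H)
    (hφmeas : ∀ f : H, Measurable fun x => ⟪φ x, f⟫)
    (c : ℝ) (hc : 0 < c)
    (hlow : ∀ f : H,
      ENNReal.ofReal (c * ‖f‖ ^ 2) ≤ ∫⁻ x, (‖⟪φ x, f⟫‖₊ : ℝ≥0∞) ^ 2 ∂μ) :
    (∀ f f' : H, (∫⁻ x, (‖⟪φ x, f⟫‖₊ : ℝ≥0∞) ^ 2 ∂μ) < ∞ →
      (∫⁻ x, (‖⟪φ x, f'⟫‖₊ : ℝ≥0∞) ^ 2 ∂μ) < ∞ →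
      (fun x => ⟪φ x, f⟫) =ᵐ[μ] (fun x => ⟪φ x, f'⟫) → f = f') ∧
    (∀ fseq : ℕ → H, (∀ n, (∫⁻ x, (‖⟪φ x, fseq n⟫‖₊ : ℝ≥0∞) ^ 2 ∂μ) < ∞) →
      ∀ ξ : X → ℂ, MemLp ξ 2 μ →
      Tendsto (fun n => eLpNorm (fun x => ⟪φ x, fseq n⟫ - ξ x) 2 μ) atTop (𝓝 0) →
      ∃ f : H, (∫⁻ x, (‖⟪φ x, f⟫‖₊ : ℝ≥0∞) ^ 2 ∂μ) < ∞ ∧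
        ξ =ᵐ[μ] fun x => ⟪φ x, f⟫) := by
  replace hlow : IsLowerSemiFrame μ φ c := hlow
  have hφ : ∀ f : H, AEStronglyMeasurable (fun x => ⟪φ x, f⟫) μ :=
    fun f => (hφmeas f).aestronglyMeasurable
  refine ⟨fun f f' _ _ h => hlow.eq_of_inner_ae_eq hc h, fun fseq hdom ξ hξ hLp => ?_⟩
  have hfin n : eLpNorm (fun x => ⟪φ x, fseq n⟫ - ξ x) 2 μ ≠ ∞ :=
    (((memLp_two_iff_lintegral_nnnorm_sq_lt_top (hφ _)).2 (hdom n)).sub hξ).2.ne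
  obtain ⟨f, hf⟩ := cauchySeq_tendsto_of_complete
    (hlow.cauchySeq_of_tendsto_eLpNorm_inner_sub hc hφ hξ.1 hfin hLp)
  have hξf : ξ =ᵐ[μ] fun x => ⟪φ x, f⟫ :=
    ae_eq_of_tendsto_eLpNorm_of_tendsto two_ne_zero (fun n => hφ (fseq n)) hξ.1 hLp
      fun x => tendsto_const_nhds.inner hf
  exact ⟨f, (memLp_two_iff_lintegral_nnnorm_sq_lt_top (hφ f)).1 (hξ.ae_eq hξf), hξf⟩
end

section
/- (Used in Section 6; cf. Prop. 2.6 of [ant-bal-semiframes1].) Let (X, μ) be a measure space, H a complex Hilbert space, and ψ, φ : X → H weakly measurable functions that are dual to each other: for all f, g ∈ H the function x ↦ ⟨f, ψ_x⟩⟨φ_x, g⟩ is μ-integrable and ∫_X ⟨f, ψ_x⟩⟨φ_x, g⟩ dμ(x) = ⟨f, g⟩. If ψ is an upper semi-frame, i.e. there is M > 0 with ∫_X |⟨f, ψ_x⟩|² dμ(x) ≤ M‖f‖² for all f ∈ H, then φ is a lower semi-frame: (1/M)‖g‖² ≤ ∫_X |⟨g, φ_x⟩|² dμ(x) for every g ∈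 H, where the integral is taken in [0, ∞]. -/
open MeasureTheory
open scoped ENNReal InnerProductSpace

local notation "⟪" x ", " y "⟫" => @inner ℂ _ _ x y

/-!
Proof idea: by duality, `‖g‖² = ∫ ⟨g, ψ_x⟩⟨φ_x, g⟩ dμ`, so Cauchy–Schwarz and the upper bound
for `ψ` give `‖g‖⁴ ≤ (∫ |⟨g, ψ_x⟩|²)(∫ |⟨φ_x, g⟩|²) ≤ M ‖g‖² ∫ |⟨φ_x, g⟩|²`; divide by `M ‖g‖²`.
-/

theorem ENNReal.sq_lintegral_mul_le_mul_lintegral_sq {α : Type*} [MeasurableSpace α]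
    {μ : Measure α} {f g : α → ℝ≥0∞} (hf : AEMeasurable f μ) (hg : AEMeasurable g μ) :
    (∫⁻ a, f a * g a ∂μ) ^ 2 ≤ (∫⁻ a, f a ^ 2 ∂μ) * ∫⁻ a, g a ^ 2 ∂μ := by
  have holder := ENNReal.lintegral_mul_le_Lp_mul_Lq μ Real.HolderConjugate.two_two hf hg
  simp only [Pi.mul_apply, ENNReal.rpow_two] at holder
  calc (∫⁻ a, f a * g a ∂μ) ^ 2
      ≤ ((∫⁻ a, f a ^ 2 ∂μ) ^ (1 / 2 : ℝ) * (∫⁻ a, g a ^ 2 ∂μ) ^ (1 / 2 : ℝ)) ^ 2 :=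
        pow_le_pow_left' holder 2
    _ = (∫⁻ a, f a ^ 2 ∂μ) * ∫⁻ a, g a ^ 2 ∂μ := by
        rw [mul_pow, ← ENNReal.rpow_natCast _ 2, ← ENNReal.rpow_natCast _ 2,
          ← ENNReal.rpow_mul, ← ENNReal.rpow_mul]
        norm_num

section DualPair

variable {𝕜 H X : Type*} [RCLike 𝕜] [NormedAddCommGroup H] [InnerProductSpace 𝕜 H]
  [MeasurableSpace X] {μ : Measure X} {ψ φ : X → H}

theorem enorm_sq_le_lintegral_enorm_inner_mul {g : H}
    (hdual : ∫ x, ⟪ψ x, g⟫_𝕜 * ⟪g, φ x⟫_𝕜 ∂μ = ⟪g, g⟫_𝕜) :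
    ‖g‖ₑ ^ 2 ≤ ∫⁻ x, ‖⟪ψ x, g⟫_𝕜‖ₑ * ‖⟪φ x, g⟫_𝕜‖ₑ ∂μ := by
  have hgg : ‖⟪g, g⟫_𝕜‖ₑ = ‖g‖ₑ ^ 2 := by
    rw [inner_self_eq_norm_sq_to_K, enorm_pow, ← ofReal_norm, ← ofReal_norm, RCLike.norm_ofReal,
      abs_norm]
  calc ‖g‖ₑ ^ 2 = ‖∫ x, ⟪ψ x, g⟫_𝕜 * ⟪g, φ x⟫_𝕜 ∂μ‖ₑ := by rw [hdual, hgg]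
    _ ≤ ∫⁻ x, ‖⟪ψ x, g⟫_𝕜 * ⟪g, φ x⟫_𝕜‖ₑ ∂μ := enorm_integral_le_lintegral_enorm _
    _ = ∫⁻ x, ‖⟪ψ x, g⟫_𝕜‖ₑ * ‖⟪φ x, g⟫_𝕜‖ₑ ∂μ := by
        simp_rw [enorm_mul, ← inner_conj_symm (φ _) g, RCLike.enorm_conj]

theorem enorm_sq_le_mul_lintegral_enorm_inner_sq {g : H}
    (hψ : AEMeasurable (fun x => ‖⟪ψ x, g⟫_𝕜‖ₑ) μ) (hφ : AEMeasurable (fun x => ‖⟪φ x, g⟫_𝕜‖ₑ) μ)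
    (hdual : ∫ x, ⟪ψ x, g⟫_𝕜 * ⟪g, φ x⟫_𝕜 ∂μ = ⟪g, g⟫_𝕜) {M : ℝ≥0∞}
    (hupper : ∫⁻ x, ‖⟪ψ x, g⟫_𝕜‖ₑ ^ 2 ∂μ ≤ M * ‖g‖ₑ ^ 2) :
    ‖g‖ₑ ^ 2 ≤ M * ∫⁻ x, ‖⟪φ x, g⟫_𝕜‖ₑ ^ 2 ∂μ := by
  rcases eq_or_ne g 0 with rfl | hg
  · simp
  have h0 : ‖g‖ₑ ^ 2 ≠ 0 := pow_ne_zero _ (enorm_ne_zero.mpr hg)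
  have htop : ‖g‖ₑ ^ 2 ≠ ∞ := ENNReal.pow_ne_top enorm_ne_top
  rw [← ENNReal.mul_le_mul_iff_right h0 htop]
  calc ‖g‖ₑ ^ 2 * ‖g‖ₑ ^ 2
      ≤ (∫⁻ x, ‖⟪ψ x, g⟫_𝕜‖ₑ * ‖⟪φ x, g⟫_𝕜‖ₑ ∂μ) ^ 2 := by
        rw [← sq]; exact pow_le_pow_left' (enorm_sq_le_lintegral_enorm_inner_mul hdual) 2
    _ ≤ (∫⁻ x, ‖⟪ψ x, g⟫_𝕜‖ₑ ^ 2 ∂μ) * ∫⁻ x, ‖⟪φ x, g⟫_𝕜‖ₑ ^ 2 ∂μ :=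
        ENNReal.sq_lintegral_mul_le_mul_lintegral_sq hψ hφ
    _ ≤ M * ‖g‖ₑ ^ 2 * ∫⁻ x, ‖⟪φ x, g⟫_𝕜‖ₑ ^ 2 ∂μ := by gcongr
    _ = ‖g‖ₑ ^ 2 * (M * ∫⁻ x, ‖⟪φ x, g⟫_𝕜‖ₑ ^ 2 ∂μ) := by ring

end DualPair

theorem statement12_general
    {X : Type*} [MeasurableSpace X] (μ : Measure X)
    {H : Type*} [NormedAddCommGroup H] [InnerProductSpace ℂ H]
    (ψ φ : X → H)
    (hψmeas : ∀ f : H, Measurable fun x => ⟪ψ x, f⟫)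
    (hφmeas : ∀ f : H, Measurable fun x => ⟪φ x, f⟫)
    (hdual : ∀ f g : H, ∫ x, ⟪ψ x, f⟫ * ⟪g, φ x⟫ ∂μ = ⟪g, f⟫)
    (M : ℝ) (hM : 0 < M)
    (hupper : ∀ f : H,
      ∫⁻ x, (‖⟪ψ x, f⟫‖₊ : ℝ≥0∞) ^ 2 ∂μ ≤ ENNReal.ofReal (M * ‖f‖ ^ 2)) :
    ∀ g : H,
      ENNReal.ofReal ((1 / M) * ‖g‖ ^ 2) ≤ ∫⁻ x, (‖⟪φ x, g⟫‖₊ : ℝ≥0∞) ^ 2 ∂μ := by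
  intro g
  have hofReal_norm_sq : ENNReal.ofReal (‖g‖ ^ 2) = ‖g‖ₑ ^ 2 := by
    rw [ENNReal.ofReal_pow (norm_nonneg g), ofReal_norm]
  have hupper_g := hupper g
  rw [ENNReal.ofReal_mul hM.le, hofReal_norm_sq] at hupper_g
  simp only [← enorm_eq_nnnorm] at hupper_g ⊢
  have key := enorm_sq_le_mul_lintegral_enorm_inner_sq (hψmeas g).enorm.aemeasurable
    (hφmeas g).enorm.aemeasurable (hdual g g) hupper_g
  calc ENNReal.ofReal (1 / M * ‖g‖ ^ 2) = ENNReal.ofReal (1 / M) * ‖g‖ₑ ^ 2 := by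
        rw [ENNReal.ofReal_mul (by positivity), hofReal_norm_sq]
    _ ≤ ENNReal.ofReal (1 / M) * (ENNReal.ofReal M * ∫⁻ x, ‖⟪φ x, g⟫‖ₑ ^ 2 ∂μ) := by gcongr
    _ = ∫⁻ x, ‖⟪φ x, g⟫‖ₑ ^ 2 ∂μ := by
        rw [← mul_assoc, ← ENNReal.ofReal_mul (by positivity), one_div_mul_cancel hM.ne',
          ENNReal.ofReal_one, one_mul]

/-- cf. Prop. 2.6 of [ant-bal-semiframes1]: If `ψ, φ` are weakly
measurable and dual to each other, `∫ ⟨f, ψ_x⟩⟨φ_x, g⟩ dμ = ⟨f, g⟩`, and `ψ` is an upper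
semi-frame with bound `M`, i.e. `∫ |⟨f, ψ_x⟩|² dμ ≤ M‖f‖²`, then `φ` is a lower
semi-frame: `(1/M)‖g‖² ≤ ∫ |⟨g, φ_x⟩|² dμ` (integral in `[0,∞]`) for every `g`.
Here `⟨f, ψ_x⟩ = ⟪ψ x, f⟫`, `⟨φ_x, g⟩ = ⟪g, φ x⟫`, `⟨g, φ_x⟩ = ⟪φ x, g⟫`. -/
theorem statement12
    {X : Type*} [MeasurableSpace X] (μ : Measure X)
    {H : Type*} [NormedAddCommGroup H] [InnerProductSpace ℂ H] [CompleteSpace H]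
    (ψ φ : X → H)
    (hψmeas : ∀ f : H, Measurable fun x => ⟪ψ x, f⟫)
    (hφmeas : ∀ f : H, Measurable fun x => ⟪φ x, f⟫)
    (hdualint : ∀ f g : H, Integrable (fun x => ⟪ψ x, f⟫ * ⟪g, φ x⟫) μ)
    (hdual : ∀ f g : H, ∫ x, ⟪ψ x, f⟫ * ⟪g, φ x⟫ ∂μ = ⟪g, f⟫)
    (M : ℝ) (hM : 0 < M)
    (hupper : ∀ f : H,
      ∫⁻ x, (‖⟪ψ x, f⟫‖₊ : ℝ≥0∞) ^ 2 ∂μ ≤ ENNReal.ofReal (M * ‖f‖ ^ 2)) :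
    ∀ g : H,
      ENNReal.ofReal ((1 / M) * ‖g‖ ^ 2) ≤ ∫⁻ x, (‖⟪φ x, g⟫‖₊ : ℝ≥0∞) ^ 2 ∂μ :=
  statement12_general μ ψ φ hψmeas hφmeas hdual M hM hupper
end
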